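/- arXiv:1603.07406 — 2 statements merged into one kernel-verified Lean document; each statement's English description precedes it below -/
import Mathlib

section
/- Let C be a category, let U, V, W : ℝ ⥤ C be functors, and let e, f ≥ 0. If (Φ₁, Ψ₁) is an e-interleaving of U and V and (Φ₂, Ψ₂) is an f-interleaving of V and W, then the pair consisting of (Φ₂ whiskered by T_e) ∘ Φ₁ : U ⟶ W T_{e+f} and (Ψ₁ whiskered by T_f) ∘ Ψ₂ : W ⟶ U T_{e+f} is an (e+f)-interleaving of U and W. -/
open CategoryTheory CategoryTheory.Limits

noncomputable section

/-- Translation functor `T_e : a ↦ a + e` on `ℝ`, viewed as a preorder category. -/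
def Tr (e : ℝ) : ℝ ⥤ ℝ :=
  Monotone.functor (f := fun a : ℝ => a + e) (fun _ _ h => by dsimp only; linarith)

@[simp] theorem Tr_obj (e a : ℝ) : (Tr e).obj a = a + e := rfl

theorem Tr_comp (e f : ℝ) : Tr e ⋙ Tr f = Tr (e + f) :=
  CategoryTheory.Functor.ext (fun a => add_assoc a e f) (fun _ _ _ => Subsingleton.elim _ _)

/-- The canonical natural transformation `U σ_e : U ⟶ U T_e` for `0 ≤ e`,
whose component at `a` is `U` applied to `a ≤ a + e`. -/
def sigmaNat {C : Type*} [Category C] (U : ℝ ⥤ C) (e : ℝ) (he : 0 ≤ e) :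
    U ⟶ Tr e ⋙ U where
  app a := U.map (homOfLE (le_add_of_nonneg_right he))
  naturality a b f := by
    dsimp [Tr]
    rw [← Functor.map_comp, ← Functor.map_comp]
    exact congrArg U.map (Subsingleton.elim _ _)

/-- `(Φ, Ψ)` is an `e`-interleaving of `U` and `V`:
`(Ψ whiskered by T_e) ∘ Φ = U σ_{2e}` and `(Φ whiskered by T_e) ∘ Ψ = V σ_{2e}`
(the `eqToHom` transports along the equality of functors `T_{2e} = T_e ⋙ T_e`). -/
def IsInterleaving {C : Type*} [Category C] (e : ℝ) (he : 0 ≤ e) (U V : ℝ ⥤ C)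
    (Φ : U ⟶ Tr e ⋙ V) (Ψ : V ⟶ Tr e ⋙ U) : Prop :=
  Φ ≫ Functor.whiskerLeft (Tr e) Ψ =
      sigmaNat U (2 * e) (by linarith) ≫ eqToHom (by rw [two_mul, ← Tr_comp, Functor.assoc]) ∧
    Ψ ≫ Functor.whiskerLeft (Tr e) Φ =
      sigmaNat V (2 * e) (by linarith) ≫ eqToHom (by rw [two_mul, ← Tr_comp, Functor.assoc])

/-- `U` and `V` are `e`-interleaved. -/
def Interleaved {C : Type*} [Category C] (e : ℝ) (U V : ℝ ⥤ C) : Prop :=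
  ∃ (he : 0 ≤ e) (Φ : U ⟶ Tr e ⋙ V) (Ψ : V ⟶ Tr e ⋙ U), IsInterleaving e he U V Φ Ψ

/-- The interleaving distance: the infimum in `[0,∞]` of the set of `e ≥ 0` such that
`U` and `V` are `e`-interleaved (`∞` if this set is empty). -/
noncomputable def dInt {C : Type*} [Category C] (U V : ℝ ⥤ C) : ENNReal :=
  sInf (ENNReal.ofReal '' {e : ℝ | Interleaved e U V})

/-!
For `Φ : U ⟶ T_e V` and `a + e ≤ b`, let `shiftApp Φ : U a ⟶ V b` be the component `Φ_a`
followed by the structure map `V (a + e ≤ b)`. By naturality the interleaving identities then hold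
in the form `shiftApp Φ ≫ shiftApp Ψ = U (a ≤ c)` for all `a + e ≤ b` and `b + e ≤ c`, and the
transports along `a + e + f = a + (e + f)` are absorbed into the structure maps. The composite
`Φ₁ Φ₂ Ψ₂ Ψ₁` then telescopes: `Φ₂ Ψ₂` is a structure map of `V`, which slides past `Ψ₁`, and what
remains is `Φ₁ Ψ₁`, a structure map of `U`.
-/

section

variable {C : Type*} [Category C] {U V W : ℝ ⥤ C} {e f : ℝ}

theorem eqToHom_eq_map_homOfLE (F : ℝ ⥤ C) {x y : ℝ} (h : x = y) (p : F.obj x = F.obj y) :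
    eqToHom p = F.map (homOfLE h.le) := by
  subst h
  simp

def shiftApp (Φ : U ⟶ Tr e ⋙ V) {a b : ℝ} (h : a + e ≤ b) : U.obj a ⟶ V.obj b :=
  Φ.app a ≫ V.map (homOfLE h)

theorem shiftApp_refl (Φ : U ⟶ Tr e ⋙ V) (a : ℝ) : shiftApp Φ (le_refl (a + e)) = Φ.app a := by
  show Φ.app a ≫ V.map (𝟙 _) = _
  rw [V.map_id]
  exact Category.comp_id _

theorem shiftApp_comp_map (Φ : U ⟶ Tr e ⋙ V) {a b c : ℝ} (hab : a + e ≤ b) (hbc : b ≤ c) :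
    shiftApp Φ hab ≫ V.map (homOfLE hbc) = shiftApp Φ (hab.trans hbc) := by
  simp only [shiftApp, Category.assoc, ← Functor.map_comp]
  rfl

theorem map_comp_shiftApp (Φ : U ⟶ Tr e ⋙ V) {a b c : ℝ} (hab : a ≤ b) (hbc : b + e ≤ c) :
    U.map (homOfLE hab) ≫ shiftApp Φ hbc = shiftApp Φ (show a + e ≤ c by linarith) := by
  have := Φ.naturality (homOfLE hab)
  simp only [shiftApp, ← Category.assoc, this]
  simp only [Functor.comp_map, Category.assoc, ← Functor.map_comp]
  rfl

theorem shiftApp_comp_whiskerLeft_comp_eqToHom {d : ℝ} (Φ₁ : U ⟶ Tr e ⋙ V) (Φ₂ : V ⟶ Tr f ⋙ W)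
    (hd : e + f = d) (p : Tr e ⋙ Tr f ⋙ W = Tr d ⋙ W) {a b c : ℝ}
    (hab : a + e ≤ b) (hbc : b + f ≤ c) :
    shiftApp (Φ₁ ≫ Functor.whiskerLeft (Tr e) Φ₂ ≫ eqToHom p) (show a + d ≤ c by linarith) =
      shiftApp Φ₁ hab ≫ shiftApp Φ₂ hbc := by
  rw [← shiftApp_comp_map Φ₁ (le_refl (a + e)) hab, Category.assoc, map_comp_shiftApp,
    shiftApp_refl]
  rw [shiftApp, NatTrans.comp_app, NatTrans.comp_app, Functor.whiskerLeft_app, eqToHom_app,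
    eqToHom_eq_map_homOfLE W (by simp only [Tr_obj]; linarith)]
  simp only [shiftApp, Category.assoc, ← Functor.map_comp]
  rfl

theorem isInterleaving_iff (he : 0 ≤ e) (Φ : U ⟶ Tr e ⋙ V) (Ψ : V ⟶ Tr e ⋙ U) :
    IsInterleaving e he U V Φ Ψ ↔
      (∀ a, shiftApp Φ (le_refl (a + e)) ≫ shiftApp Ψ (le_refl (a + e + e)) =
        U.map (homOfLE (by linarith : a ≤ a + e + e))) ∧
      (∀ a, shiftApp Ψ (le_refl (a + e)) ≫ shiftApp Φ (le_refl (a + e + e)) =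
        V.map (homOfLE (by linarith : a ≤ a + e + e))) := by
  have key : ∀ (F : ℝ ⥤ C) (a : ℝ) (p : Tr (2 * e) ⋙ F = Tr e ⋙ Tr e ⋙ F),
      (sigmaNat F (2 * e) (by linarith) ≫ eqToHom p).app a =
        F.map (homOfLE (by linarith : a ≤ a + e + e)) := by
    intro F a p
    rw [NatTrans.comp_app, eqToHom_app, eqToHom_eq_map_homOfLE F (by simp only [Tr_obj]; ring)]
    exact (F.map_comp _ _).symm
  rw [IsInterleaving, NatTrans.ext_iff, NatTrans.ext_iff, funext_iff, funext_iff]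
  simp only [NatTrans.comp_app, key, shiftApp_refl]
  rfl

theorem IsInterleaving.symm {he : 0 ≤ e} {Φ : U ⟶ Tr e ⋙ V} {Ψ : V ⟶ Tr e ⋙ U}
    (h : IsInterleaving e he U V Φ Ψ) :
    IsInterleaving e he V U Ψ Φ :=
  And.symm h

theorem IsInterleaving.shiftApp_comp_shiftApp {he : 0 ≤ e} {Φ : U ⟶ Tr e ⋙ V} {Ψ : V ⟶ Tr e ⋙ U}
    (h : IsInterleaving e he U V Φ Ψ) {a b c : ℝ} (hab : a + e ≤ b) (hbc : b + e ≤ c) :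
    shiftApp Φ hab ≫ shiftApp Ψ hbc = U.map (homOfLE (by linarith : a ≤ c)) := by
  rw [← shiftApp_comp_map Φ (le_refl (a + e)) hab, Category.assoc, map_comp_shiftApp,
    ← shiftApp_comp_map Ψ (le_refl (a + e + e)) (by linarith : a + e + e ≤ c),
    reassoc_of% ((isInterleaving_iff he Φ Ψ).1 h).1 a, ← Functor.map_comp]
  rfl

theorem IsInterleaving.shiftApp_comp_comp {he : 0 ≤ e} {hf : 0 ≤ f}
    {Φ₁ : U ⟶ Tr e ⋙ V} {Ψ₁ : V ⟶ Tr e ⋙ U} {Φ₂ : V ⟶ Tr f ⋙ W} {Ψ₂ : W ⟶ Tr f ⋙ V}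
    (h₁ : IsInterleaving e he U V Φ₁ Ψ₁) (h₂ : IsInterleaving f hf V W Φ₂ Ψ₂)
    {a b c d x : ℝ} (hab : a + e ≤ b) (hbc : b + f ≤ c) (hcd : c + f ≤ d) (hdx : d + e ≤ x) :
    (shiftApp Φ₁ hab ≫ shiftApp Φ₂ hbc) ≫ shiftApp Ψ₂ hcd ≫ shiftApp Ψ₁ hdx =
      U.map (homOfLE (by linarith : a ≤ x)) := by
  rw [Category.assoc, reassoc_of% h₂.shiftApp_comp_shiftApp hbc hcd, map_comp_shiftApp,
    h₁.shiftApp_comp_shiftApp]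

end

/-- Composition of interleavings: if `(Φ₁, Ψ₁)` is an `e`-interleaving of `U` and `V`
and `(Φ₂, Ψ₂)` is an `f`-interleaving of `V` and `W`, then
`(Φ₂ whiskered by T_e) ∘ Φ₁` and `(Ψ₁ whiskered by T_f) ∘ Ψ₂` form an
`(e+f)`-interleaving of `U` and `W` (the `eqToHom`s transport along the equalities
`T_e ⋙ T_f = T_{e+f}` and `T_f ⋙ T_e = T_{e+f}`). -/
theorem interleaving_comp {C : Type*} [Category C] (U V W : ℝ ⥤ C) (e f : ℝ)
    (he : 0 ≤ e) (hf : 0 ≤ f)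
    (Φ₁ : U ⟶ Tr e ⋙ V) (Ψ₁ : V ⟶ Tr e ⋙ U)
    (Φ₂ : V ⟶ Tr f ⋙ W) (Ψ₂ : W ⟶ Tr f ⋙ V)
    (h₁ : IsInterleaving e he U V Φ₁ Ψ₁) (h₂ : IsInterleaving f hf V W Φ₂ Ψ₂) :
    IsInterleaving (e + f) (by linarith) U W
      (Φ₁ ≫ Functor.whiskerLeft (Tr e) Φ₂ ≫ eqToHom (by rw [← Tr_comp, Functor.assoc]))
      (Ψ₂ ≫ Functor.whiskerLeft (Tr f) Ψ₁ ≫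
        eqToHom (by rw [show e + f = f + e from add_comm e f, ← Tr_comp, Functor.assoc])) := by
  refine (isInterleaving_iff _ _ _).2 ⟨fun a => ?_, fun a => ?_⟩
  · rw [shiftApp_comp_whiskerLeft_comp_eqToHom _ _ rfl _ (le_refl _) (by linarith),
      shiftApp_comp_whiskerLeft_comp_eqToHom _ _ (add_comm f e) _ (le_refl _) (by linarith)]
    exact h₁.shiftApp_comp_comp h₂ _ _ _ _
  · rw [shiftApp_comp_whiskerLeft_comp_eqToHom _ _ (add_comm f e) _ (le_refl _) (by linarith),
      shiftApp_comp_whiskerLeft_comp_eqToHom _ _ rfl _ (le_refl _) (by linarith)]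
    exact h₂.symm.shiftApp_comp_comp h₁.symm _ _ _ _

end
end

section
/- Let M be a pseudometric space, C a category, and G : spacetime(M) ⥤ C any functor. Then the map sending x ∈ M to the functor G ∘ η(x) : ℝ ⥤ C is 1-Lipschitz with respect to the interleaving distance: d_Int(G ∘ η(x), G ∘ η(y)) ≤ dist x y for all x, y ∈ M. In particular, every coherent map into the space of functors ℝ ⥤ C is 1-Lipschitz. -/
/-!
Since `(x, a) ≤ (y, a + dist x y)` in spacetime, the world lines `η(x)` and `η(y)` are
`dist x y`-interleaved; the interleaving identities hold automatically because spacetime is a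
thin category. Postcomposing an interleaving with `G` gives an interleaving, so
`d_Int(G ∘ η(x), G ∘ η(y)) ≤ d_Int(η(x), η(y)) ≤ dist x y`.
-/

open CategoryTheory CategoryTheory.Limits

noncomputable section

/-- The spacetime of a pseudometric space `M`: the set `M × ℝ` (encoded as a structure
with a point component and a time component). -/
@[ext] structure Spacetime (M : Type*) [PseudoMetricSpace M] where
  pos : M
  time : ℝ

/-- The spacetime preorder: `(x,s) ≤ (y,t)` iff `dist x y ≤ t - s`. -/
instance Spacetime.instPreorder (M : Type*) [PseudoMetricSpace M] :
    Preorder (Spacetime M) where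
  le p q := dist p.pos q.pos ≤ q.time - p.time
  le_refl p := by simp
  le_trans p q r h₁ h₂ := by
    have h := dist_triangle p.pos q.pos r.pos
    try simp only [] at *
    linarith

theorem Spacetime.le_def {M : Type*} [PseudoMetricSpace M] (p q : Spacetime M) :
    p ≤ q ↔ dist p.pos q.pos ≤ q.time - p.time := Iff.rfl

/-- The constant world line `η(x) : ℝ ⥤ Spacetime M` of a point `x`, i.e. the functor
induced by the monotone map `s ↦ (x, s)`. -/
def eta {M : Type*} [PseudoMetricSpace M] (x : M) : ℝ ⥤ Spacetime M :=
  Monotone.functor (f := fun s : ℝ => (⟨x, s⟩ : Spacetime M))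
    (fun a b h => show dist x x ≤ b - a by rw [dist_self]; linarith)

section Interleaving

variable {C : Type*} [Category C]

theorem dInt_le_of_interleaved {e : ℝ} {U V : ℝ ⥤ C} (h : Interleaved e U V) :
    dInt U V ≤ ENNReal.ofReal e :=
  sInf_le ⟨e, h, rfl⟩

theorem interleaved_of_thin [Quiver.IsThin C] {e : ℝ} (he : 0 ≤ e) {U V : ℝ ⥤ C}
    (Φ : U ⟶ Tr e ⋙ V) (Ψ : V ⟶ Tr e ⋙ U) : Interleaved e U V :=
  ⟨he, Φ, Ψ, Subsingleton.elim _ _, Subsingleton.elim _ _⟩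

theorem Interleaved.comp_right {D : Type*} [Category D] {e : ℝ} {U V : ℝ ⥤ C}
    (h : Interleaved e U V) (G : C ⥤ D) : Interleaved e (U ⋙ G) (V ⋙ G) := by
  obtain ⟨he, Φ, Ψ, hΦΨ, hΨΦ⟩ := h
  refine ⟨he, Functor.whiskerRight Φ G, Functor.whiskerRight Ψ G, ?_, ?_⟩ <;> ext a <;>
    simp only [NatTrans.comp_app, eqToHom_app]
  · have h := congrArg (fun η => G.map (η.app a)) hΦΨ
    simp only [NatTrans.comp_app, Functor.map_comp, eqToHom_app, eqToHom_map] at h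
    exact h
  · have h := congrArg (fun η => G.map (η.app a)) hΨΦ
    simp only [NatTrans.comp_app, Functor.map_comp, eqToHom_app, eqToHom_map] at h
    exact h

theorem dInt_comp_right_le {D : Type*} [Category D] (U V : ℝ ⥤ C) (G : C ⥤ D) :
    dInt (U ⋙ G) (V ⋙ G) ≤ dInt U V :=
  sInf_le_sInf (Set.image_mono fun _ h => h.comp_right G)

end Interleaving

section WorldLine

variable {M : Type*} [PseudoMetricSpace M]

def etaHomTrOfDistLe {x y : M} {e : ℝ} (h : dist x y ≤ e) : eta x ⟶ Tr e ⋙ eta y where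
  app a := homOfLE (show dist x y ≤ (a + e) - a by linarith)

theorem eta_interleaved (x y : M) : Interleaved (dist x y) (eta x) (eta y) :=
  interleaved_of_thin dist_nonneg (etaHomTrOfDistLe le_rfl)
    (etaHomTrOfDistLe (dist_comm y x).le)

end WorldLine

/-- For any functor `G : Spacetime M ⥤ C`, the map `x ↦ G ∘ η(x)` is 1-Lipschitz for the
interleaving distance; in particular every coherent map into the space of functors
`ℝ ⥤ C` is 1-Lipschitz. -/
theorem coherent_is_one_lipschitz {M : Type*} [PseudoMetricSpace M]
    {C : Type*} [Category C] (G : Spacetime M ⥤ C) :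
    (∀ x y : M, dInt (eta x ⋙ G) (eta y ⋙ G) ≤ ENNReal.ofReal (dist x y)) ∧
      ∀ g : M → ℝ ⥤ C, (∃ G' : Spacetime M ⥤ C, ∀ x : M, g x = eta x ⋙ G') →
        ∀ x y : M, dInt (g x) (g y) ≤ ENNReal.ofReal (dist x y) := by
  have lipschitz (G : Spacetime M ⥤ C) (x y : M) :
      dInt (eta x ⋙ G) (eta y ⋙ G) ≤ ENNReal.ofReal (dist x y) :=
    (dInt_comp_right_le _ _ G).trans (dInt_le_of_interleaved (eta_interleaved x y))
  refine ⟨lipschitz G, ?_⟩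
  rintro g ⟨G', hG'⟩ x y
  rw [hG' x, hG' y]
  exact lipschitz G' x y

end
end
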